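/- arXiv:1805.02093 — 2 statements merged into one kernel-verified Lean document; each statement's English description precedes it below -/
import Mathlib

section
/- If the pair (A,P) is (h,k)-dichotomic with (P_n) strongly invariant for the system (A), then the sequence of norms defined by |||x|||_n = sup_{m ≥ n} (h_m/h_n)‖A_m^n P_n x‖ + sup_{p ≤ n} (k_n/k_p)‖B_n^p Q_n x‖, for all n ∈ ℕ and x ∈ X, is a well-defined sequence of norms compatible with (P_n). -/
open ContinuousLinearMap Filter

noncomputable section

variable {X : Type*} [NormedAddCommGroup X] [NormedSpace ℝ X]

/-- The evolution operator `A_m^n` associated to the linear difference system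
`x_{n+1} = A_n x_n`: `A_m^n = A_{m-1} ⋯ A_n` for `m > n` and `A_n^n = I`. -/
def evol (A : ℕ → X →L[ℝ] X) : ℕ → ℕ → X →L[ℝ] X
  | 0, _ => 1
  | m + 1, n => if m + 1 ≤ n then 1 else A m ∘L evol A m n

/-- `P` is a projectors sequence. -/
def ProjSeq (P : ℕ → X →L[ℝ] X) : Prop := ∀ n, P n ∘L P n = P n

/-- The projectors sequence `P` is invariant for the system `(A)`. -/
def InvariantFor (A P : ℕ → X →L[ℝ] X) : Prop := ∀ n, A n ∘L P n = P (n + 1) ∘L A n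

/-- The projectors sequence `P` is strongly invariant for the system `(A)`: it is invariant and
the restriction of `A_m^n` to `Ker P_n` is an isomorphism from `Ker P_n` onto `Ker P_m`. -/
def StronglyInvariantFor (A P : ℕ → X →L[ℝ] X) : Prop :=
  InvariantFor A P ∧ ∀ m n : ℕ, n ≤ m →
    Set.BijOn (evol A m n) (LinearMap.ker (P n : X →ₗ[ℝ] X) : Set X) (LinearMap.ker (P m : X →ₗ[ℝ] X) : Set X)

/-- A growth rate: an increasing sequence with values in `[1, ∞)` tending to `∞`. -/
def IsGrowthRate (h : ℕ → ℝ) : Prop :=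
  StrictMono h ∧ (∀ n, 1 ≤ h n) ∧ Tendsto h atTop atTop

/-- The pair `(A, P)` is `(h,k)`-dichotomic. -/
def Dichotomic (A P : ℕ → X →L[ℝ] X) (h k : ℕ → ℝ) : Prop :=
  ∃ d : ℕ → ℝ, (∀ n, 1 ≤ d n) ∧ Monotone d ∧
    ∀ m n : ℕ, n ≤ m → ∀ x : X,
      h m * ‖evol A m n (P n x)‖ ≤ d n * (h n * ‖P n x‖) ∧
      k m * ‖(1 - P n) x‖ ≤ d m * (k n * ‖evol A m n ((1 - P n) x)‖)

/-- The pair `(A, P)` is uniformly `(h,k)`-dichotomic. -/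
def UniformDichotomic (A P : ℕ → X →L[ℝ] X) (h k : ℕ → ℝ) : Prop :=
  ∃ d : ℝ, 1 ≤ d ∧
    ∀ m n : ℕ, n ≤ m → ∀ x : X,
      h m * ‖evol A m n (P n x)‖ ≤ d * (h n * ‖P n x‖) ∧
      k m * ‖(1 - P n) x‖ ≤ d * (k n * ‖evol A m n ((1 - P n) x)‖)

/-- The pair `(A, P)` has `(h,k)`-growth. -/
def HasGrowth (A P : ℕ → X →L[ℝ] X) (h k : ℕ → ℝ) : Prop :=
  ∃ g : ℕ → ℝ, (∀ n, 1 ≤ g n) ∧ Monotone g ∧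
    ∀ m n : ℕ, n ≤ m → ∀ x : X,
      h n * ‖evol A m n (P n x)‖ ≤ g n * (h m * ‖P n x‖) ∧
      k n * ‖(1 - P n) x‖ ≤ g m * (k m * ‖evol A m n ((1 - P n) x)‖)

/-- `N` is a sequence of norms on `X`. -/
def IsNormSeq (N : ℕ → X → ℝ) : Prop :=
  ∀ n, (∀ x y, N n (x + y) ≤ N n x + N n y) ∧
    (∀ (a : ℝ) (x : X), N n (a • x) = |a| * N n x) ∧
    (∀ x, N n x = 0 ↔ x = 0)

/-- The sequence of norms `N` is compatible with the projectors sequence `P`. -/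
def NormsCompatible (N : ℕ → X → ℝ) (P : ℕ → X →L[ℝ] X) : Prop :=
  IsNormSeq N ∧ ∃ c : ℕ → ℝ, (∀ n, 1 ≤ c n) ∧ Monotone c ∧
    ∀ (n : ℕ) (x : X), ‖x‖ ≤ N n x ∧ N n x ≤ c n * (‖P n x‖ + ‖(1 - P n) x‖)

/-- The defining properties of the skew-evolution operator `B` associated to the pair `(A, P)`:
`A_m^n B_m^n Q_m = Q_m`, `B_m^n A_m^n Q_n = Q_n` and `B_m^n Q_m = Q_n B_m^n Q_m` for `m ≥ n`,
where `Q_n = I - P_n`. -/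
def SkewEvol (A P : ℕ → X →L[ℝ] X) (B : ℕ → ℕ → X →L[ℝ] X) : Prop :=
  ∀ m n : ℕ, n ≤ m →
    evol A m n ∘L (B m n ∘L (1 - P m)) = 1 - P m ∧
    B m n ∘L (evol A m n ∘L (1 - P n)) = 1 - P n ∧
    B m n ∘L (1 - P m) = (1 - P n) ∘L (B m n ∘L (1 - P m))

/- Each of the two suprema is a pointwise supremum of seminorms, bounded by the dichotomy
estimates (for the unstable part after transporting them along `B`, using `A_n^p B_n^p Q_n = Q_n`
and `Q_p B_n^p Q_n = B_n^p Q_n`). Hence it is a seminorm, squeezed between its term of index `n`,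
namely `‖P_n x‖` (resp. `‖Q_n x‖`), and `d_n ‖P_n x‖` (resp. `d_n ‖Q_n x‖`); definiteness of the
sum comes from `‖x‖ ≤ ‖P_n x‖ + ‖Q_n x‖`. -/

theorem Seminorm.exists_apply_eq_sSup_image {𝕜 E ι : Type*} [NormedField 𝕜] [AddCommGroup E]
    [Module 𝕜 E] {p : ι → Seminorm 𝕜 E} {s : Set ι}
    (hp : ∀ x, BddAbove ((fun i => p i x) '' s)) :
    ∃ q : Seminorm 𝕜 E, ∀ x, q x = sSup ((fun i => p i x) '' s) := by
  refine ⟨⨆ i : s, p i, fun x => ?_⟩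
  have hbdd : BddAbove (Set.range fun i : s => p i) :=
    Seminorm.bddAbove_range_iff.2 fun x => by simpa only [Set.image_eq_range] using hp x
  rw [Seminorm.iSup_apply hbdd, sSup_image']

theorem Seminorm.exists_apply_eq_sSup_mul_norm {E F ι : Type*} [SeminormedAddCommGroup E]
    [NormedSpace ℝ E] [SeminormedAddCommGroup F] [NormedSpace ℝ F] {w : ι → ℝ}
    (hw : ∀ i, 0 ≤ w i) (T : ι → E →L[ℝ] F) {s : Set ι}
    (hbdd : ∀ x, BddAbove ((fun i => w i * ‖T i x‖) '' s)) :
    ∃ q : Seminorm ℝ E, ∀ x, q x = sSup ((fun i => w i * ‖T i x‖) '' s) := by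
  have happly : ∀ i x, (normSeminorm ℝ F).comp (w i • T i).toLinearMap x = w i * ‖T i x‖ := by
    intro i x
    simp [norm_smul, abs_of_nonneg (hw i)]
  simp_rw [← happly] at hbdd ⊢
  exact Seminorm.exists_apply_eq_sSup_image hbdd

theorem isNormSeq_of_seminorm {N : ℕ → X → ℝ} (hN : ∀ n, ∃ q : Seminorm ℝ X, ∀ x, q x = N n x)
    (hle : ∀ n x, ‖x‖ ≤ N n x) : IsNormSeq N := by
  intro n
  obtain ⟨q, hq⟩ := hN n
  simp_rw [← hq]
  refine ⟨map_add_le_add q, fun a x => by rw [map_smul_eq_mul, Real.norm_eq_abs], fun x => ?_⟩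
  refine ⟨fun hx => norm_le_zero_iff.1 ?_, fun hx => hx ▸ map_zero q⟩
  simpa [← hq, hx] using hle n x

theorem IsGrowthRate.pos {h : ℕ → ℝ} (hh : IsGrowthRate h) (n : ℕ) : 0 < h n :=
  one_pos.trans_le (hh.2.1 n)

theorem evol_self (A : ℕ → X →L[ℝ] X) (n : ℕ) : evol A n n = 1 := by
  cases n <;> simp [evol]

section SkewEvol

variable {A P : ℕ → X →L[ℝ] X} {B : ℕ → ℕ → X →L[ℝ] X}

theorem SkewEvol.evol_apply (hB : SkewEvol A P B) {m n : ℕ} (hnm : n ≤ m) (x : X) :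
    evol A m n (B m n ((1 - P m) x)) = (1 - P m) x :=
  congr($((hB m n hnm).1) x)

theorem SkewEvol.proj_apply (hB : SkewEvol A P B) {m n : ℕ} (hnm : n ≤ m) (x : X) :
    (1 - P n) (B m n ((1 - P m) x)) = B m n ((1 - P m) x) :=
  congr($((hB m n hnm).2.2) x).symm

theorem SkewEvol.apply_self (hB : SkewEvol A P B) (n : ℕ) (x : X) :
    B n n ((1 - P n) x) = (1 - P n) x := by
  simpa [evol_self] using hB.evol_apply le_rfl x

end SkewEvol

def stableSup (A P : ℕ → X →L[ℝ] X) (h : ℕ → ℝ) (n : ℕ) (x : X) : ℝ :=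
  sSup ((fun m => (h m / h n) * ‖evol A m n (P n x)‖) '' Set.Ici n)

def unstableSup (P : ℕ → X →L[ℝ] X) (B : ℕ → ℕ → X →L[ℝ] X) (k : ℕ → ℝ) (n : ℕ) (x : X) : ℝ :=
  sSup ((fun p => (k n / k p) * ‖B n p ((1 - P n) x)‖) '' Set.Iic n)

section Bounds

variable {A P : ℕ → X →L[ℝ] X} {B : ℕ → ℕ → X →L[ℝ] X} {h k : ℕ → ℝ} {n : ℕ} {d : ℝ}

theorem stable_term_le (hh : 0 < h n)
    (hstab : ∀ m, n ≤ m → ∀ x, h m * ‖evol A m n (P n x)‖ ≤ d * (h n * ‖P n x‖))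
    {m : ℕ} (hm : n ≤ m) (x : X) :
    (h m / h n) * ‖evol A m n (P n x)‖ ≤ d * ‖P n x‖ := by
  rw [div_mul_eq_mul_div, div_le_iff₀ hh]
  linarith [hstab m hm x]

theorem unstable_term_le (hk : ∀ p, 0 < k p) (hB : SkewEvol A P B)
    (hunst : ∀ p ≤ n, ∀ y, k n * ‖(1 - P p) y‖ ≤ d * (k p * ‖evol A n p ((1 - P p) y)‖))
    {p : ℕ} (hp : p ≤ n) (x : X) :
    (k n / k p) * ‖B n p ((1 - P n) x)‖ ≤ d * ‖(1 - P n) x‖ := by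
  have key := hunst p hp (B n p ((1 - P n) x))
  rw [hB.proj_apply hp, hB.evol_apply hp] at key
  rw [div_mul_eq_mul_div, div_le_iff₀ (hk p)]
  linarith

theorem norm_le_stableSup (hh : 0 < h n)
    (hstab : ∀ m, n ≤ m → ∀ x, h m * ‖evol A m n (P n x)‖ ≤ d * (h n * ‖P n x‖)) (x : X) :
    ‖P n x‖ ≤ stableSup A P h n x := by
  refine le_csSup ⟨d * ‖P n x‖, ?_⟩ ⟨n, Set.self_mem_Ici, by simp [evol_self, hh.ne']⟩
  rintro _ ⟨m, hm, rfl⟩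
  exact stable_term_le hh hstab hm x

theorem stableSup_le (hh : 0 < h n)
    (hstab : ∀ m, n ≤ m → ∀ x, h m * ‖evol A m n (P n x)‖ ≤ d * (h n * ‖P n x‖)) (x : X) :
    stableSup A P h n x ≤ d * ‖P n x‖ := by
  refine csSup_le (Set.nonempty_Ici.image _) ?_
  rintro _ ⟨m, hm, rfl⟩
  exact stable_term_le hh hstab hm x

theorem norm_le_unstableSup (hk : ∀ p, 0 < k p) (hB : SkewEvol A P B)
    (hunst : ∀ p ≤ n, ∀ y, k n * ‖(1 - P p) y‖ ≤ d * (k p * ‖evol A n p ((1 - P p) y)‖))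
    (x : X) : ‖(1 - P n) x‖ ≤ unstableSup P B k n x := by
  refine le_csSup ⟨d * ‖(1 - P n) x‖, ?_⟩ ⟨n, Set.self_mem_Iic, by beta_reduce; rw [hB.apply_self, div_self (hk n).ne', one_mul]⟩
  rintro _ ⟨p, hp, rfl⟩
  exact unstable_term_le hk hB hunst hp x

theorem unstableSup_le (hk : ∀ p, 0 < k p) (hB : SkewEvol A P B)
    (hunst : ∀ p ≤ n, ∀ y, k n * ‖(1 - P p) y‖ ≤ d * (k p * ‖evol A n p ((1 - P p) y)‖))
    (x : X) : unstableSup P B k n x ≤ d * ‖(1 - P n) x‖ := by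
  refine csSup_le (Set.nonempty_Iic.image _) ?_
  rintro _ ⟨p, hp, rfl⟩
  exact unstable_term_le hk hB hunst hp x

theorem exists_seminorm_eq_stableSup (hh : ∀ m, 0 < h m)
    (hstab : ∀ m, n ≤ m → ∀ x, h m * ‖evol A m n (P n x)‖ ≤ d * (h n * ‖P n x‖)) :
    ∃ q : Seminorm ℝ X, ∀ x, q x = stableSup A P h n x :=
  Seminorm.exists_apply_eq_sSup_mul_norm (fun m => (div_pos (hh m) (hh n)).le)
    (fun m => evol A m n ∘L P n)
    fun x => ⟨d * ‖P n x‖, by rintro _ ⟨m, hm, rfl⟩; exact stable_term_le (hh n) hstab hm x⟩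

theorem exists_seminorm_eq_unstableSup (hk : ∀ p, 0 < k p) (hB : SkewEvol A P B)
    (hunst : ∀ p ≤ n, ∀ y, k n * ‖(1 - P p) y‖ ≤ d * (k p * ‖evol A n p ((1 - P p) y)‖)) :
    ∃ q : Seminorm ℝ X, ∀ x, q x = unstableSup P B k n x :=
  Seminorm.exists_apply_eq_sSup_mul_norm (fun p => (div_pos (hk n) (hk p)).le)
    (fun p => B n p ∘L (1 - P n))
    fun x => ⟨d * ‖(1 - P n) x‖, by rintro _ ⟨p, hp, rfl⟩; exact unstable_term_le hk hB hunst hp x⟩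

end Bounds

theorem stmt_4_general (A P : ℕ → X →L[ℝ] X) (B : ℕ → ℕ → X →L[ℝ] X)
    (hB : SkewEvol A P B)
    (h k : ℕ → ℝ) (hh : IsGrowthRate h) (hk : IsGrowthRate k)
    (hD : Dichotomic A P h k) :
    NormsCompatible (fun n x =>
      sSup ((fun m => (h m / h n) * ‖evol A m n (P n x)‖) '' Set.Ici n) +
      sSup ((fun p => (k n / k p) * ‖B n p ((1 - P n) x)‖) '' Set.Iic n)) P := by
  obtain ⟨d, hd1, hd_mono, hdich⟩ := hD
  have hstab : ∀ n m, n ≤ m → ∀ x, h m * ‖evol A m n (P n x)‖ ≤ d n * (h n * ‖P n x‖) :=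
    fun n m hm x => (hdich m n hm x).1
  have hunst : ∀ n, ∀ p ≤ n, ∀ y,
      k n * ‖(1 - P p) y‖ ≤ d n * (k p * ‖evol A n p ((1 - P p) y)‖) :=
    fun n p hp y => (hdich n p hp y).2
  have hle : ∀ n x, ‖x‖ ≤ stableSup A P h n x + unstableSup P B k n x := fun n x =>
    calc ‖x‖ = ‖P n x + (1 - P n) x‖ := by simp
      _ ≤ ‖P n x‖ + ‖(1 - P n) x‖ := norm_add_le _ _
      _ ≤ _ := add_le_add (norm_le_stableSup (hh.pos n) (hstab n) x)
          (norm_le_unstableSup hk.pos hB (hunst n) x)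
  refine ⟨isNormSeq_of_seminorm (fun n => ?_) hle, d, hd1, hd_mono, fun n x => ⟨hle n x, ?_⟩⟩
  · obtain ⟨q₁, hq₁⟩ := exists_seminorm_eq_stableSup hh.pos (hstab n)
    obtain ⟨q₂, hq₂⟩ := exists_seminorm_eq_unstableSup hk.pos hB (hunst n)
    exact ⟨q₁ + q₂, fun x => by simp [hq₁, hq₂, stableSup, unstableSup]⟩
  · calc stableSup A P h n x + unstableSup P B k n x
        ≤ d n * ‖P n x‖ + d n * ‖(1 - P n) x‖ :=
          add_le_add (stableSup_le (hh.pos n) (hstab n) x)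
            (unstableSup_le hk.pos hB (hunst n) x)
      _ = d n * (‖P n x‖ + ‖(1 - P n) x‖) := by ring

theorem stmt_4 [CompleteSpace X] (A P : ℕ → X →L[ℝ] X) (B : ℕ → ℕ → X →L[ℝ] X)
    (hP : ProjSeq P) (hSI : StronglyInvariantFor A P) (hB : SkewEvol A P B)
    (h k : ℕ → ℝ) (hh : IsGrowthRate h) (hk : IsGrowthRate k)
    (hD : Dichotomic A P h k) :
    NormsCompatible (fun n x =>
      sSup ((fun m => (h m / h n) * ‖evol A m n (P n x)‖) '' Set.Ici n) +
      sSup ((fun p => (k n / k p) * ‖B n p ((1 - P n) x)‖) '' Set.Iic n)) P :=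
  stmt_4_general A P B hB h k hh hk hD

end
end

section
/- Let (P_n) be strongly invariant for the system (A) and let h, k be growth rates. If there exists a nondecreasing sequence g : ℕ → [1,∞) such that h_n‖A_m^n P_n x‖ ≤ g_n h_m‖x‖ and k_n‖B_m^n Q_m x‖ ≤ g_m k_m‖x‖ for all m ≥ n and all x ∈ X, then the pair (A,P) has (h,k)-growth. -/
open ContinuousLinearMap Filter

noncomputable section

variable {X : Type*} [NormedAddCommGroup X] [NormedSpace ℝ X]

variable {A P : ℕ → X →L[ℝ] X}

theorem ProjSeq.apply_apply (hP : ProjSeq P) (n : ℕ) (x : X) : P n (P n x) = P n x :=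
  congrArg (fun T : X →L[ℝ] X => T x) (hP n)

theorem ProjSeq.apply_compl (hP : ProjSeq P) (n : ℕ) (x : X) : P n ((1 - P n) x) = 0 := by
  simp only [sub_apply, one_apply_eq_self, map_sub, hP.apply_apply, sub_self]

theorem StronglyInvariantFor.apply_evol_compl (hSI : StronglyInvariantFor A P) (hP : ProjSeq P)
    {m n : ℕ} (hmn : n ≤ m) (x : X) : P m (evol A m n ((1 - P n) x)) = 0 :=
  (hSI.2 m n hmn).mapsTo (hP.apply_compl n x)

theorem StronglyInvariantFor.compl_apply_evol_compl (hSI : StronglyInvariantFor A P)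
    (hP : ProjSeq P) {m n : ℕ} (hmn : n ≤ m) (x : X) :
    (1 - P m) (evol A m n ((1 - P n) x)) = evol A m n ((1 - P n) x) := by
  rw [sub_apply, one_apply_eq_self, hSI.apply_evol_compl hP hmn, sub_zero]

theorem SkewEvol.apply_evol_compl {B : ℕ → ℕ → X →L[ℝ] X} (hB : SkewEvol A P B) {m n : ℕ}
    (hmn : n ≤ m) (x : X) : B m n (evol A m n ((1 - P n) x)) = (1 - P n) x :=
  congrArg (fun T : X →L[ℝ] X => T x) (hB m n hmn).2.1

theorem stmt_9_general (A P : ℕ → X →L[ℝ] X) (B : ℕ → ℕ → X →L[ℝ] X)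
    (hP : ProjSeq P) (hSI : StronglyInvariantFor A P) (hB : SkewEvol A P B)
    (h k : ℕ → ℝ)
    (hyp : ∃ g : ℕ → ℝ, (∀ n, 1 ≤ g n) ∧ Monotone g ∧
      ∀ m n : ℕ, n ≤ m → ∀ x : X,
        h n * ‖evol A m n (P n x)‖ ≤ g n * (h m * ‖x‖) ∧
        k n * ‖B m n ((1 - P m) x)‖ ≤ g m * (k m * ‖x‖)) :
    HasGrowth A P h k := by
  obtain ⟨g, hg_one, hg_mono, hg⟩ := hyp
  refine ⟨g, hg_one, hg_mono, fun m n hmn x => ⟨?_, ?_⟩⟩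
  · simpa only [hP.apply_apply] using (hg m n hmn (P n x)).1
  · -- the backward estimate applied to `A_m^n Q_n x ∈ Ker P_m`, which `B_m^n` sends back to `Q_n x`
    simpa only [hSI.compl_apply_evol_compl hP hmn, hB.apply_evol_compl hmn]
      using (hg m n hmn (evol A m n ((1 - P n) x))).2

theorem stmt_9 [CompleteSpace X] (A P : ℕ → X →L[ℝ] X) (B : ℕ → ℕ → X →L[ℝ] X)
    (hP : ProjSeq P) (hSI : StronglyInvariantFor A P) (hB : SkewEvol A P B)
    (h k : ℕ → ℝ) (hh : IsGrowthRate h) (hk : IsGrowthRate k)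
    (hyp : ∃ g : ℕ → ℝ, (∀ n, 1 ≤ g n) ∧ Monotone g ∧
      ∀ m n : ℕ, n ≤ m → ∀ x : X,
        h n * ‖evol A m n (P n x)‖ ≤ g n * (h m * ‖x‖) ∧
        k n * ‖B m n ((1 - P m) x)‖ ≤ g m * (k m * ‖x‖)) :
    HasGrowth A P h k :=
  stmt_9_general A P B hP hSI hB h k hyp

end
end
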